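/- arXiv:2104.06972 — 3 statements merged into one kernel-verified Lean document; each statement's English description precedes it below -/
import Mathlib

section
/- Let t₀ > 0 and A = 2√t₀. If z : [t₀, T] → ℂ is differentiable, z(t₀) = 0, and z satisfies d(z⁴)/dt = −8(z² + 4t₀), and z admits an expansion z(t) = b·(t − t₀)^{1/4} + o((t − t₀)^{1/4}) as t → t₀⁺, then b⁴ = −32 t₀; in particular one may take b = e^{iπ/4}·2·(2t₀)^{1/4}, so the trace emanates from the origin tangentially to the ray of angle π/4. -/
/-! The ansatz forces `z → 0`, so `(z⁴)' = −8(z² + 4t₀) → −32t₀` as `t → t₀⁺`. Since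
`z(t₀) = 0`, the right derivative of `z⁴` at `t₀` is then `−32t₀`, i.e.
`z(t)⁴ / (t − t₀) → −32t₀`. The ansatz also says `z(t) / (t − t₀)^{1/4} → b`, and the fourth
power of this quotient is the previous one, so `b⁴ = −32t₀`. -/

open Complex Filter Topology Real

open Asymptotics Set

lemma tendsto_sub_rpow_nhdsGT {a p : ℝ} (hp : 0 < p) :
    Tendsto (fun t : ℝ => (t - a) ^ p) (𝓝[>] a) (𝓝 0) := by
  have hc : Continuous fun t : ℝ => (t - a) ^ p :=
    (continuous_sub_right a).rpow_const fun _ => Or.inr hp.le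
  simpa [Real.zero_rpow hp.ne'] using (hc.tendsto a).mono_left nhdsWithin_le_nhds

section LittleO

variable {α : Type*} {l : Filter α} {f : α → ℂ} {g : α → ℝ} {b : ℂ}

lemma isBigO_of_isLittleO_sub_mul (h : (fun x => f x - b * g x) =o[l] g) : f =O[l] g := by
  have hbg : (fun x => b * (g x : ℂ)) =O[l] g :=
    (isBigO_refl (fun x => (g x : ℂ)) l).const_mul_left b |>.trans_le fun x => by simp
  simpa using h.isBigO.add hbg

lemma tendsto_div_of_isLittleO_sub_mul (h : (fun x => f x - b * g x) =o[l] g)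
    (hg : ∀ᶠ x in l, g x ≠ 0) : Tendsto (fun x => f x / g x) l (𝓝 b) := by
  have h' : (fun x => f x - b * g x) =o[l] fun x => (g x : ℂ) :=
    h.trans_isBigO <| isBigO_of_le _ fun x => by simp
  have hlim := h'.tendsto_div_nhds_zero.add_const b
  rw [zero_add] at hlim
  refine hlim.congr' ?_
  filter_upwards [hg] with x hx
  have : (g x : ℂ) ≠ 0 := by exact_mod_cast hx
  field_simp
  ring

end LittleO

lemma tendsto_slope_of_tendsto_deriv {E : Type*} [NormedAddCommGroup E] [NormedSpace ℝ E]
    {a c : ℝ} (hac : a < c) {f f' : ℝ → E} {L : E}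
    (hf : ∀ t ∈ Ioo a c, HasDerivAt f (f' t) t) (hfa : Tendsto f (𝓝[>] a) (𝓝 (f a)))
    (hf' : Tendsto f' (𝓝[>] a) (𝓝 L)) : Tendsto (slope f a) (𝓝[>] a) (𝓝 L) := by
  have hIoo : Ioo a c ∈ 𝓝[>] a := Ioo_mem_nhdsGT hac
  have hderiv : HasDerivWithinAt f L (Ici a) a := by
    refine hasDerivWithinAt_Ici_of_tendsto_deriv
      (fun t ht => (hf t ht).differentiableAt.differentiableWithinAt)
      (hfa.mono_left (nhdsWithin_mono a Ioo_subset_Ioi_self)) hIoo (hf'.congr' ?_)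
    filter_upwards [hIoo] with t ht using (hf t ht).deriv.symm
  exact (hasDerivWithinAt_iff_tendsto_slope' (lt_irrefl a)).mp hderiv.Ioi_of_Ici

lemma pow_eq_of_isLittleO_rpow {n : ℕ} (hn : n ≠ 0) {a c : ℝ} (hac : a < c)
    {z f' : ℝ → ℂ} {b L : ℂ} (hz : z a = 0)
    (hd : ∀ t ∈ Ioo a c, HasDerivAt (fun s => z s ^ n) (f' t) t)
    (hf' : Tendsto f' (𝓝[>] a) (𝓝 L))
    (hexp : (fun t => z t - b * ((t - a) ^ ((1 : ℝ) / n) : ℝ))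
      =o[𝓝[>] a] fun t => (t - a) ^ ((1 : ℝ) / n)) :
    b ^ n = L := by
  have hp : (0 : ℝ) < 1 / n := by positivity
  have hpos : ∀ᶠ t in 𝓝[>] a, 0 < t - a := by
    filter_upwards [self_mem_nhdsWithin] with t ht using sub_pos.mpr ht
  have hzlim : Tendsto (fun t => z t ^ n) (𝓝[>] a) (𝓝 (z a ^ n)) := by
    rw [hz]
    exact ((isBigO_of_isLittleO_sub_mul hexp).trans_tendsto (tendsto_sub_rpow_nhdsGT hp)).pow n
  have hslope := tendsto_slope_of_tendsto_deriv hac hd hzlim hf'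
  have hratio := (tendsto_div_of_isLittleO_sub_mul hexp
    (hpos.mono fun t ht => (Real.rpow_pos_of_pos ht _).ne')).pow n
  refine tendsto_nhds_unique (hratio.congr' ?_) hslope
  filter_upwards [hpos] with t ht
  have hr : (((t - a) ^ ((1 : ℝ) / n) : ℝ) : ℂ) ^ n = ((t - a : ℝ) : ℂ) := by
    rw [← Complex.ofReal_pow, ← Real.rpow_natCast, ← Real.rpow_mul ht.le,
      one_div_mul_cancel (by exact_mod_cast hn), Real.rpow_one]
  rw [slope_def_module, hz, zero_pow hn, sub_zero, div_pow, hr, Complex.real_smul,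
    Complex.ofReal_inv, div_eq_inv_mul]

lemma exp_pi_div_four_mul_rpow_pow_four {c : ℝ} (hc : 0 ≤ c) :
    (Complex.exp (Complex.I * (π / 4)) * (2 * (c ^ ((1 : ℝ) / 4) : ℝ))) ^ 4 =
      -16 * (c : ℂ) := by
  have hexp : Complex.exp (Complex.I * (π / 4)) ^ 4 = -1 := by
    rw [← Complex.exp_nat_mul, ← Complex.exp_pi_mul_I]
    congr 1
    push_cast
    ring
  have hroot : (c ^ ((1 : ℝ) / 4)) ^ 4 = c := by
    rw [← Real.rpow_natCast, ← Real.rpow_mul hc]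
    norm_num
  rw [mul_pow, hexp, mul_pow, ← Complex.ofReal_pow, hroot]
  ring

theorem asymptotics_case_iii_general
    (t₀ T : ℝ) (ht₀ : 0 < t₀) (hT : t₀ < T)
    (z : ℝ → ℂ) (b : ℂ)
    (hz0 : z t₀ = 0)
    (hode : ∀ t ∈ Set.Ioo t₀ T,
      HasDerivAt (fun s => (z s) ^ 4) (-8 * ((z t) ^ 2 + 4 * (t₀ : ℂ))) t)
    (hexp : (fun t : ℝ => z t - b * ((t - t₀) ^ ((1 : ℝ) / 4) : ℝ))
      =o[𝓝[>] t₀] (fun t : ℝ => (t - t₀) ^ ((1 : ℝ) / 4))) :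
    b ^ 4 = -32 * (t₀ : ℂ) ∧
      (Complex.exp (Complex.I * (Real.pi / 4)) *
        (2 * ((2 * t₀) ^ ((1 : ℝ) / 4) : ℝ))) ^ 4 = -32 * (t₀ : ℂ) := by
  have hexp_nat : (fun t : ℝ => z t - b * ((t - t₀) ^ ((1 : ℝ) / (4 : ℕ)) : ℝ))
      =o[𝓝[>] t₀] fun t : ℝ => (t - t₀) ^ ((1 : ℝ) / (4 : ℕ)) := by
    simpa using hexp
  have hz : Tendsto z (𝓝[>] t₀) (𝓝 0) :=
    (isBigO_of_isLittleO_sub_mul hexp).trans_tendsto (tendsto_sub_rpow_nhdsGT (by norm_num))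
  have hrhs :
      Tendsto (fun t => -8 * (z t ^ 2 + 4 * (t₀ : ℂ))) (𝓝[>] t₀) (𝓝 (-32 * (t₀ : ℂ))) := by
    convert ((hz.pow 2).add_const (4 * (t₀ : ℂ))).const_mul (-8) using 2
    ring
  refine ⟨pow_eq_of_isLittleO_rpow four_ne_zero hT hz0 hode hrhs hexp_nat, ?_⟩
  rw [exp_pi_div_four_mul_rpow_pow_four (by positivity)]
  push_cast
  ring

/-- Case (iii) of Theorem 1 (`A = 2√t₀`): matching the ansatz
`z(t) = b·(t − t₀)^{1/4} + o((t − t₀)^{1/4})` into `(z⁴)' = −8(z² + 4t₀)` forces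
`b⁴ = −32t₀`; in particular one may take `b = e^{iπ/4}·2·(2t₀)^{1/4}`. -/
theorem asymptotics_case_iii
    (t₀ T A : ℝ) (ht₀ : 0 < t₀) (hT : t₀ < T) (hA : A = 2 * Real.sqrt t₀)
    (z : ℝ → ℂ) (b : ℂ)
    (hz0 : z t₀ = 0)
    (hode : ∀ t ∈ Set.Ioo t₀ T,
      HasDerivAt (fun s => (z s) ^ 4) (-8 * ((z t) ^ 2 + 4 * (t₀ : ℂ))) t)
    (hexp : (fun t : ℝ => z t - b * ((t - t₀) ^ ((1 : ℝ) / 4) : ℝ))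
      =o[𝓝[>] t₀] (fun t : ℝ => (t - t₀) ^ ((1 : ℝ) / 4))) :
    b ^ 4 = -32 * (t₀ : ℂ) ∧
      (Complex.exp (Complex.I * (Real.pi / 4)) *
        (2 * ((2 * t₀) ^ ((1 : ℝ) / 4) : ℝ))) ^ 4 = -32 * (t₀ : ℂ) :=
  asymptotics_case_iii_general t₀ T ht₀ hT z b hz0 hode hexp
end

section
/- Fix A > 0, t₀ > 0. Define for t ≥ t₀ the curve z(t) = [e^{i4π/(A²+4)} · 2^{8/(A²+4)} · A^{2A²/(A²+4)} · (t − t₀) − 4t₀]^{1/2}. Then z(t)² + 4t₀ = e^{i4π/(A²+4)} · 2^{8/(A²+4)} · A^{2A²/(A²+4)} · (t − t₀), and z(t) satisfies the algebraic trace equation 4(t − t₀)^{A²/4 + 1} = −(z(t)² + 4t₀)^{A²/4 + 1} · A^{−A²/2}, where the power of z² + 4t₀ is taken with the branch of log continuous along the ray e^{i4π/(A²+4)}·ℝ₊ (argument 4π/(A²+4)). -/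
open Complex Real

/-! The first identity is `(w ^ (1/2)) ^ 2 = w` for the principal branch. For the trace equation,
the exponent `A²/4 + 1` turns the angle `4π/(A²+4)` into `π`, so the phase factor is `-1`, and it
turns the constant `2^{8/(A²+4)} A^{2A²/(A²+4)}` into `4 A^{A²/2}`, which cancels `A^{-A²/2}`. -/

lemma Complex.cpow_one_div_two_sq (w : ℂ) : (w ^ ((1 : ℂ) / 2)) ^ 2 = w := by
  rw [one_div]
  exact cpow_ofNat_inv_pow w 2

lemma exp_I_mul_trace_angle (A : ℝ) :
    Complex.exp (Complex.I * ((A ^ 2 / 4 + 1) * (4 * π / (A ^ 2 + 4)))) = -1 := by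
  have h4 : (A : ℂ) ^ 2 + 4 ≠ 0 := by exact_mod_cast (by positivity : A ^ 2 + 4 ≠ 0)
  have hangle : ((A : ℂ) ^ 2 / 4 + 1) * (4 * π / (A ^ 2 + 4)) = π := by field_simp
  rw [hangle, mul_comm, exp_pi_mul_I]

lemma trace_constant_rpow {A : ℝ} (hA : 0 < A) :
    ((2 : ℝ) ^ (8 / (A ^ 2 + 4)) * A ^ (2 * A ^ 2 / (A ^ 2 + 4))) ^ (A ^ 2 / 4 + 1) =
      4 * A ^ (A ^ 2 / 2) := by
  have h4 : A ^ 2 + 4 ≠ 0 := by positivity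
  have htwo : 8 / (A ^ 2 + 4) * (A ^ 2 / 4 + 1) = (2 : ℕ) := by push_cast; field_simp; ring
  have hA' : 2 * A ^ 2 / (A ^ 2 + 4) * (A ^ 2 / 4 + 1) = A ^ 2 / 2 := by field_simp; ring
  rw [Real.mul_rpow (by positivity) (by positivity), ← Real.rpow_mul zero_le_two,
    ← Real.rpow_mul hA.le, htwo, hA', Real.rpow_natCast]
  norm_num

lemma trace_equation_real {A : ℝ} (hA : 0 < A) {s : ℝ} (hs : 0 ≤ s) :
    4 * s ^ (A ^ 2 / 4 + 1) =
      ((2 ^ (8 / (A ^ 2 + 4)) * A ^ (2 * A ^ 2 / (A ^ 2 + 4))) * s) ^ (A ^ 2 / 4 + 1) *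
        A ^ (-(A ^ 2) / 2) := by
  have hcancel : A ^ (A ^ 2 / 2) * A ^ (-(A ^ 2) / 2) = 1 := by
    rw [← Real.rpow_add hA, neg_div, add_neg_cancel, Real.rpow_zero]
  rw [Real.mul_rpow (by positivity) hs, trace_constant_rpow hA]
  linear_combination -4 * s ^ (A ^ 2 / 4 + 1) * hcancel

theorem explicit_trace_theorem2_general
    (A t₀ : ℝ) (hA : 0 < A)
    (C : ℝ) (hC : C = (2 : ℝ) ^ (8 / (A ^ 2 + 4)) * A ^ (2 * A ^ 2 / (A ^ 2 + 4)))
    (z : ℝ → ℂ)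
    (hz : ∀ t : ℝ, z t =
      (Complex.exp (Complex.I * (4 * π / (A ^ 2 + 4))) * C * ((t : ℂ) - t₀) -
        4 * (t₀ : ℂ)) ^ ((1 : ℂ) / 2)) :
    ∀ t : ℝ, t₀ ≤ t →
      (z t) ^ 2 + 4 * (t₀ : ℂ) =
        Complex.exp (Complex.I * (4 * π / (A ^ 2 + 4))) * C * ((t : ℂ) - t₀) ∧
      4 * (((t - t₀) ^ (A ^ 2 / 4 + 1) : ℝ) : ℂ) =
        -(((C * (t - t₀)) ^ (A ^ 2 / 4 + 1) : ℝ) *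
            Complex.exp (Complex.I * ((A ^ 2 / 4 + 1) * (4 * π / (A ^ 2 + 4))))) *
          ((A ^ (-(A ^ 2) / 2) : ℝ) : ℂ) := by
  intro t ht
  refine ⟨by rw [hz t, Complex.cpow_one_div_two_sq]; ring, ?_⟩
  rw [exp_I_mul_trace_angle, mul_neg_one, neg_neg, hC]
  exact_mod_cast trace_equation_real hA (sub_nonneg.mpr ht)

/-- Theorem 2: the explicit trace
`z(t) = [e^{i4π/(A²+4)}·2^{8/(A²+4)}·A^{2A²/(A²+4)}·(t−t₀) − 4t₀]^{1/2}`
satisfies `z² + 4t₀ = e^{i4π/(A²+4)}·2^{8/(A²+4)}·A^{2A²/(A²+4)}·(t−t₀)` and the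
algebraic trace equation `4(t−t₀)^{A²/4+1} = −(z²+4t₀)^{A²/4+1}·A^{−A²/2}`, the
power of `z² + 4t₀` being taken with the branch of argument `4π/(A²+4)`. -/
theorem explicit_trace_theorem2
    (A t₀ : ℝ) (hA : 0 < A) (ht₀ : 0 < t₀)
    (C : ℝ) (hC : C = (2 : ℝ) ^ (8 / (A ^ 2 + 4)) * A ^ (2 * A ^ 2 / (A ^ 2 + 4)))
    (z : ℝ → ℂ)
    (hz : ∀ t : ℝ, z t =
      (Complex.exp (Complex.I * (4 * π / (A ^ 2 + 4))) * C * ((t : ℂ) - t₀) -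
        4 * (t₀ : ℂ)) ^ ((1 : ℂ) / 2)) :
    ∀ t : ℝ, t₀ ≤ t →
      (z t) ^ 2 + 4 * (t₀ : ℂ) =
        Complex.exp (Complex.I * (4 * π / (A ^ 2 + 4))) * C * ((t : ℂ) - t₀) ∧
      4 * (((t - t₀) ^ (A ^ 2 / 4 + 1) : ℝ) : ℂ) =
        -(((C * (t - t₀)) ^ (A ^ 2 / 4 + 1) : ℝ) *
            Complex.exp (Complex.I * ((A ^ 2 / 4 + 1) * (4 * π / (A ^ 2 + 4))))) *
          ((A ^ (-(A ^ 2) / 2) : ℝ) : ℂ) :=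
  explicit_trace_theorem2_general A t₀ hA C hC z hz
end

section
/- Fix A > 0 and consider the ODE dw/dt = 2w/(w² − A²(t − t₀)). Along any solution w(t) with w(t) ≠ 0 and w(t)² ≠ A²(t−t₀), the quantity (w(t)² − (A² + 4)(t − t₀)) · w(t)^{A²/2} is constant in t (for a continuous branch of the power). -/
open Complex

/-- First integral for `w' = 2w/(w² − A²(t−t₀))`: along any solution (with a
continuous branch `L` of `log w`), the quantity
`(w² − (A²+4)(t−t₀))·w^{A²/2}` is constant. -/
theorem first_integral_sqrt_driving
    (A t₀ T : ℝ) (hA : 0 < A) (hT : t₀ < T)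
    (w L : ℝ → ℂ) (L' : ℝ → ℂ)
    (hw : ∀ t ∈ Set.Icc t₀ T,
      HasDerivAt w (2 * w t / ((w t) ^ 2 - (A : ℂ) ^ 2 * ((t : ℂ) - t₀))) t)
    (hL : ∀ t ∈ Set.Icc t₀ T, HasDerivAt L (L' t) t)
    (hbranch : ∀ t ∈ Set.Icc t₀ T, Complex.exp (L t) = w t)
    (hw0 : ∀ t ∈ Set.Icc t₀ T, w t ≠ 0)
    (hne : ∀ t ∈ Set.Icc t₀ T, (w t) ^ 2 ≠ (A : ℂ) ^ 2 * ((t : ℂ) - t₀)) :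
    ∃ k : ℂ, ∀ t ∈ Set.Icc t₀ T,
      ((w t) ^ 2 - ((A : ℂ) ^ 2 + 4) * ((t : ℂ) - t₀)) *
        Complex.exp (((A : ℂ) ^ 2 / 2) * L t) = k := by
  set F : ℝ → ℂ := fun t =>
    ((w t) ^ 2 - ((A : ℂ) ^ 2 + 4) * ((t : ℂ) - t₀)) *
      Complex.exp (((A : ℂ) ^ 2 / 2) * L t) with hF
  -- derivative of F is zero on Icc
  have key : ∀ t ∈ Set.Icc t₀ T, HasDerivAt F 0 t := by
    intro t ht
    have hD : (w t) ^ 2 - (A : ℂ) ^ 2 * ((t : ℂ) - t₀) ≠ 0 :=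
      sub_ne_zero.mpr (hne t ht)
    -- derivative of (t:ℂ) - t₀
    have hid : HasDerivAt (fun s : ℝ => ((s : ℂ) - (t₀ : ℂ))) 1 t := by
      simpa using (Complex.ofRealCLM.hasDerivAt (x := t)).sub_const (t₀ : ℂ)
    -- L' t * w t = w' t via uniqueness of derivatives within Icc
    have hud : UniqueDiffWithinAt ℝ (Set.Icc t₀ T) t :=
      (uniqueDiffOn_Icc hT) t ht
    have h1 : HasDerivWithinAt w (Complex.exp (L t) * L' t) (Set.Icc t₀ T) t := by
      have := ((hL t ht).cexp).hasDerivWithinAt (s := Set.Icc t₀ T)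
      exact this.congr (fun s hs => (hbranch s hs).symm) (hbranch t ht).symm
    have h2 : HasDerivWithinAt w
        (2 * w t / ((w t) ^ 2 - (A : ℂ) ^ 2 * ((t : ℂ) - t₀)))
        (Set.Icc t₀ T) t := (hw t ht).hasDerivWithinAt
    have hLw : Complex.exp (L t) * L' t
        = 2 * w t / ((w t) ^ 2 - (A : ℂ) ^ 2 * ((t : ℂ) - t₀)) :=
      (h1.derivWithin hud).symm.trans (h2.derivWithin hud)
    rw [hbranch t ht] at hLw
    have hL' : L' t = 2 / ((w t) ^ 2 - (A : ℂ) ^ 2 * ((t : ℂ) - t₀)) := by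
      have hw0t := hw0 t ht
      field_simp at hLw ⊢
      have : w t * L' t * ((w t) ^ 2 - (A : ℂ) ^ 2 * ((t : ℂ) - t₀))
          = w t * (2 : ℂ) := by linear_combination (w t) * hLw
      exact mul_left_cancel₀ hw0t (by linear_combination this)
    -- build the derivative of F
    have hA' : HasDerivAt (fun s => (w s) ^ 2 - ((A : ℂ) ^ 2 + 4) * ((s : ℂ) - t₀))
        (2 * w t ^ 1 * (2 * w t / ((w t) ^ 2 - (A : ℂ) ^ 2 * ((t : ℂ) - t₀)))
          - ((A : ℂ) ^ 2 + 4) * 1) t := by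
      have hp : HasDerivAt (fun s => (w s) ^ 2)
          (2 * w t ^ 1 * (2 * w t / ((w t) ^ 2 - (A : ℂ) ^ 2 * ((t : ℂ) - t₀)))) t := by
        have := (hw t ht).mul (hw t ht)
        have h2 : (fun s => w s * w s) = fun s => (w s) ^ 2 := by
          funext s; ring
        rw [show (w * w) = fun s => (w s) ^ 2 from h2] at this
        exact this.congr_deriv (by ring)
      exact (hp.sub (hid.const_mul ((A : ℂ) ^ 2 + 4))).congr_deriv (by ring)
    have hB : HasDerivAt (fun s => Complex.exp (((A : ℂ) ^ 2 / 2) * L s))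
        (Complex.exp (((A : ℂ) ^ 2 / 2) * L t) * (((A : ℂ) ^ 2 / 2) * L' t)) t :=
      ((hL t ht).const_mul ((A : ℂ) ^ 2 / 2)).cexp
    have hFd := hA'.mul hB
    have : (2 * w t ^ 1 * (2 * w t / ((w t) ^ 2 - (A : ℂ) ^ 2 * ((t : ℂ) - t₀)))
          - ((A : ℂ) ^ 2 + 4) * 1) * Complex.exp (((A : ℂ) ^ 2 / 2) * L t)
        + ((w t) ^ 2 - ((A : ℂ) ^ 2 + 4) * ((t : ℂ) - t₀)) *
          (Complex.exp (((A : ℂ) ^ 2 / 2) * L t) * (((A : ℂ) ^ 2 / 2) * L' t))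
        = 0 := by
      rw [hL']
      field_simp
      ring
    rw [this] at hFd
    exact hFd
  -- F is constant on Icc
  refine ⟨F t₀, fun t ht => ?_⟩
  have hcont : ContinuousOn F (Set.Icc t₀ T) :=
    fun s hs => ((key s hs).continuousAt).continuousWithinAt
  have hderiv : ∀ s ∈ Set.Ico t₀ T, HasDerivWithinAt F 0 (Set.Ici s) s :=
    fun s hs => ((key s (Set.mem_Icc_of_Ico hs)).hasDerivWithinAt)
  exact constant_of_has_deriv_right_zero hcont hderiv t ht
end
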